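/- If a two-party protocol without shared oracle or shared randomness has agreement probability p (the probability both parties output the same value), then there exists an eavesdropper E, seeing only the transcript, whose output equals Alice's output with probability exactly p: specifically, E samples a view of Alice consistent with the transcript and outputs Alice's output on that view. Consequently, for 0 ≤ α ≤ 1 and 0 ≤ γ < 1 − α, there is no (q, α, γ)-key-agreement protocol relative to the trivial function family. -/

import Mathlib

open scoped BigOperators Classical

noncomputable section

variable {Ω : Type*} [Fintype Ω]

/-- Probability of an event under a mass function `μ`. -/
def prEv (μ : Ω → ℝ) (E : Ω → Prop) : ℝ := ∑ ω, if E ω then μ ω else 0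

/-- Distribution (pmf) of a random variable. -/
def rvDist (μ : Ω → ℝ) {α : Type*} (X : Ω → α) : α → ℝ :=
  fun a => prEv μ (fun ω => X ω = a)

/-- Conditional distribution of `X` given the event `B = b`. -/
def condDist (μ : Ω → ℝ) {α β : Type*} (X : Ω → α) (B : Ω → β) (b : β) : α → ℝ :=
  fun a => prEv μ (fun ω => X ω = a ∧ B ω = b) / prEv μ (fun ω => B ω = b)

/-- Product of two distributions. -/
def prodDist {α β : Type*} (P : α → ℝ) (Q : β → ℝ) : α × β → ℝ := fun p => P p.1 * Q p.2

/-- Statistical (total variation) distance between two distributions on a finite set. -/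
def SD {α : Type*} [Fintype α] (P Q : α → ℝ) : ℝ := (1/2) * ∑ a, |P a - Q a|

/-- Shannon entropy (base 2) of a distribution, with the convention `0 · log(1/0) = 0`. -/
def H2 {α : Type*} [Fintype α] (P : α → ℝ) : ℝ :=
  ∑ a, if P a = 0 then 0 else P a * Real.logb 2 (1 / P a)

/-- Shannon entropy of a random variable. -/
def entRV (μ : Ω → ℝ) {α : Type*} [Fintype α] (X : Ω → α) : ℝ := H2 (rvDist μ X)

/-- Conditional mutual information `I(A;B|C)` (in bits). -/
def condMI (μ : Ω → ℝ) {α β γ : Type*} [Fintype α] [Fintype β] [Fintype γ]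
    (A : Ω → α) (B : Ω → β) (C : Ω → γ) : ℝ :=
  entRV μ (fun ω => (A ω, C ω)) + entRV μ (fun ω => (B ω, C ω))
    - entRV μ (fun ω => (A ω, B ω, C ω)) - entRV μ C

/-- The conditional probability measure given `Z = z`. -/
def condMeas (μ : Ω → ℝ) {ζ : Type*} (Z : Ω → ζ) (z : ζ) : Ω → ℝ :=
  fun ω => if Z ω = z then μ ω / prEv μ (fun ω' => Z ω' = z) else 0

/-- `μ` is a probability mass function. -/
def IsPMF (μ : Ω → ℝ) : Prop := (∀ ω, 0 ≤ μ ω) ∧ ∑ ω, μ ω = 1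

end

section KeyAgreement

variable {Ω α β γ : Type*} [Fintype Ω] (μ : Ω → ℝ)

lemma prEv_congr {E F : Ω → Prop} (h : ∀ ω, E ω ↔ F ω) : prEv μ E = prEv μ F := by
  rw [show E = F from funext fun ω => propext (h ω)]

lemma prEv_nonneg (hμ : ∀ ω, 0 ≤ μ ω) (E : Ω → Prop) : 0 ≤ prEv μ E :=
  Finset.sum_nonneg fun ω _ => by split_ifs <;> simp [hμ ω]

lemma prEv_eq_zero_of_imp (hμ : ∀ ω, 0 ≤ μ ω) {E F : Ω → Prop} (hF : prEv μ F = 0)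
    (hEF : ∀ ω, E ω → F ω) : prEv μ E = 0 := by
  refine le_antisymm ?_ (prEv_nonneg μ hμ _)
  calc prEv μ E ≤ prEv μ F :=
        Finset.sum_le_sum fun ω _ => by split_ifs <;> simp_all
    _ = 0 := hF

lemma sum_prEv_mem_and (X : Ω → α) (s : Finset α) (E : Ω → Prop) :
    ∑ a ∈ s, prEv μ (fun ω => X ω = a ∧ E ω) = prEv μ (fun ω => X ω ∈ s ∧ E ω) := by
  simp only [prEv]
  rw [Finset.sum_comm]
  refine Finset.sum_congr rfl fun ω _ => ?_
  by_cases hE : E ω <;> simp [hE]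

lemma sum_prEv_and [Fintype α] (X : Ω → α) (E : Ω → Prop) :
    ∑ a, prEv μ (fun ω => X ω = a ∧ E ω) = prEv μ E := by
  simpa using sum_prEv_mem_and μ X Finset.univ E

lemma prEv_comp_eq_and [Fintype α] (X : Ω → α) (f : α → β) (b : β) (E : Ω → Prop) :
    prEv μ (fun ω => f (X ω) = b ∧ E ω)
      = ∑ a with f a = b, prEv μ (fun ω => X ω = a ∧ E ω) := by
  simpa using (sum_prEv_mem_and μ X {a | f a = b} E).symm

lemma sum_mul_comp_eq [Fintype α] (X : Ω → α) (F : α → ℝ) :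
    ∑ ω, μ ω * F (X ω) = ∑ a, F a * prEv μ (fun ω => X ω = a) := by
  simp only [prEv, Finset.mul_sum, mul_ite, mul_zero]
  rw [Finset.sum_comm]
  simp [mul_comm]

lemma isPMF_rvDist [Fintype α] (hμ : IsPMF μ) (X : Ω → α) : IsPMF (rvDist μ X) := by
  refine ⟨fun a => prEv_nonneg μ hμ.1 _, ?_⟩
  simpa [rvDist, hμ.2, prEv] using sum_prEv_and μ X (fun _ => True)

lemma isPMF_condDist [Fintype α] (hμ : IsPMF μ) (X : Ω → α) (Z : Ω → γ) {z : γ}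
    (hz : prEv μ (fun ω => Z ω = z) ≠ 0) : IsPMF (condDist μ X Z z) := by
  refine ⟨fun a => div_nonneg (prEv_nonneg μ hμ.1 _) (prEv_nonneg μ hμ.1 _), ?_⟩
  simp only [condDist]
  rw [← Finset.sum_div, sum_prEv_and, div_self hz]

/-- The conditional law of `X` given `Z = z`; on a null fibre, where `condDist` is the zero
function, the law of `X` is used instead so that the result is always a distribution. -/
noncomputable def condLaw (X : Ω → α) (Z : Ω → γ) (z : γ) : α → ℝ :=
  if prEv μ (fun ω => Z ω = z) = 0 then rvDist μ X else condDist μ X Z z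

lemma isPMF_condLaw [Fintype α] (hμ : IsPMF μ) (X : Ω → α) (Z : Ω → γ) (z : γ) :
    IsPMF (condLaw μ X Z z) := by
  unfold condLaw
  split_ifs with hz
  · exact isPMF_rvDist μ hμ X
  · exact isPMF_condDist μ hμ X Z hz

def CondIndep (X : Ω → α) (Y : Ω → β) (Z : Ω → γ) : Prop :=
  ∀ z a b, prEv μ (fun ω => X ω = a ∧ Y ω = b ∧ Z ω = z) * prEv μ (fun ω => Z ω = z)
    = prEv μ (fun ω => X ω = a ∧ Z ω = z) * prEv μ (fun ω => Y ω = b ∧ Z ω = z)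

variable {μ}

lemma CondIndep.comp [Fintype α] [Fintype β] {δ ε : Type*} {X : Ω → α} {Y : Ω → β}
    {Z : Ω → γ} (h : CondIndep μ X Y Z) (f : α → δ) (g : β → ε) :
    CondIndep μ (fun ω => f (X ω)) (fun ω => g (Y ω)) Z := by
  intro z c d
  have hsplit : prEv μ (fun ω => f (X ω) = c ∧ g (Y ω) = d ∧ Z ω = z)
      = ∑ a with f a = c, ∑ b with g b = d,
          prEv μ (fun ω => X ω = a ∧ Y ω = b ∧ Z ω = z) := by
    rw [prEv_comp_eq_and]
    refine Finset.sum_congr rfl fun a _ => ?_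
    rw [prEv_congr μ (fun ω => and_left_comm), prEv_comp_eq_and]
    exact Finset.sum_congr rfl fun b _ => prEv_congr μ fun ω => and_left_comm
  rw [hsplit, prEv_comp_eq_and, prEv_comp_eq_and, Finset.sum_mul_sum, Finset.sum_mul]
  refine Finset.sum_congr rfl fun a _ => ?_
  rw [Finset.sum_mul]
  exact Finset.sum_congr rfl fun b _ => h z a b

/-- Guessing with the conditional law of `V` given `Z` hits `U` exactly as often as `V` does:
by conditional independence, resampling `V` given `Z` does not change the joint law of
`(U, V, Z)`. -/
theorem sum_mul_condLaw_eq_prEv_eq [Fintype γ] {K : Type*} [Fintype K] (hμ : ∀ ω, 0 ≤ μ ω)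
    {U V : Ω → K} {Z : Ω → γ} (h : CondIndep μ U V Z) :
    ∑ ω, μ ω * condLaw μ V Z (Z ω) (U ω) = prEv μ (fun ω => U ω = V ω) := by
  have hatom : ∀ z k, condLaw μ V Z z k * prEv μ (fun ω => U ω = k ∧ Z ω = z)
      = prEv μ (fun ω => U ω = k ∧ V ω = k ∧ Z ω = z) := by
    intro z k
    by_cases hz : prEv μ (fun ω => Z ω = z) = 0
    · rw [prEv_eq_zero_of_imp μ hμ hz fun ω h => h.2, mul_zero,
        prEv_eq_zero_of_imp μ hμ hz fun ω h => h.2.2]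
    · rw [condLaw, if_neg hz, condDist, div_mul_eq_mul_div, div_eq_iff hz, h z k k, mul_comm]
  calc ∑ ω, μ ω * condLaw μ V Z (Z ω) (U ω)
      = ∑ p : γ × K, condLaw μ V Z p.1 p.2 * prEv μ (fun ω => (Z ω, U ω) = p) :=
        sum_mul_comp_eq μ (fun ω => (Z ω, U ω)) fun p => condLaw μ V Z p.1 p.2
    _ = ∑ z, ∑ k, prEv μ (fun ω => Z ω = z ∧ U ω = k ∧ V ω = k) := by
        rw [Fintype.sum_prod_type]
        refine Finset.sum_congr rfl fun z _ => Finset.sum_congr rfl fun k _ => ?_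
        rw [prEv_congr μ (fun ω => by rw [Prod.mk.injEq, and_comm]), hatom]
        exact prEv_congr μ fun ω => by tauto
    _ = prEv μ (fun ω => U ω = V ω) := by
        rw [Finset.sum_comm]
        simp only [sum_prEv_and]
        rw [← sum_prEv_and μ U fun ω => U ω = V ω]
        exact Finset.sum_congr rfl fun k _ => prEv_congr μ fun ω =>
          ⟨fun ⟨h1, h2⟩ => ⟨h1, h1.trans h2.symm⟩, fun ⟨h1, h2⟩ => ⟨h1, h2 ▸ h1⟩⟩

end KeyAgreement

theorem no_it_key_agreement_general {Ω τ VA VB K : Type*}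
    [Fintype Ω] [Fintype τ] [Fintype VA] [Fintype VB] [Fintype K]
    (μ : Ω → ℝ) (hμ : IsPMF μ)
    (viewA : Ω → VA) (viewB : Ω → VB) (Tr : Ω → τ)
    (fA : VA → K) (fB : VB → K)
    -- the parties' views are conditionally independent given the transcript
    (hcond : ∀ (t : τ) (a : VA) (b : VB),
        prEv μ (fun ω => viewA ω = a ∧ viewB ω = b ∧ Tr ω = t) *
            prEv μ (fun ω => Tr ω = t)
          = prEv μ (fun ω => viewA ω = a ∧ Tr ω = t) *
            prEv μ (fun ω => viewB ω = b ∧ Tr ω = t)) :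
    (∃ e : τ → K → ℝ,
        (∀ t, (∀ k, 0 ≤ e t k) ∧ ∑ k, e t k = 1) ∧
        (∑ ω, μ ω * e (Tr ω) (fA (viewA ω)))
          = prEv μ (fun ω => fA (viewA ω) = fB (viewB ω))) ∧
    (∀ α γ : ℝ, 0 ≤ α → α ≤ 1 → 0 ≤ γ → γ < 1 - α →
      ¬ (prEv μ (fun ω => fA (viewA ω) = fB (viewB ω)) ≥ 1 - α ∧
         ∀ e : τ → K → ℝ, (∀ t, (∀ k, 0 ≤ e t k) ∧ ∑ k, e t k = 1) →
           (∑ ω, μ ω * e (Tr ω) (fA (viewA ω))) ≤ γ)) := by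
  set e := condLaw μ (fun ω => fB (viewB ω)) Tr
  have he : ∀ t, IsPMF (e t) := isPMF_condLaw μ hμ _ Tr
  have hmatch : ∑ ω, μ ω * e (Tr ω) (fA (viewA ω))
      = prEv μ (fun ω => fA (viewA ω) = fB (viewB ω)) :=
    sum_mul_condLaw_eq_prEv_eq hμ.1 (CondIndep.comp hcond fA fB)
  refine ⟨⟨e, he, hmatch⟩, ?_⟩
  rintro α γ - - - hγ ⟨hacc, hsec⟩
  linarith [hsec e he]

/-- In a two-party protocol without a shared oracle or shared randomness (so the parties'
views are conditionally independent given the transcript, which is determined by Alice's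
view), there is an eavesdropper `e` (a distribution over keys for each transcript) whose
output matches Alice's output with probability exactly `P[out^A = out^B]`. Consequently,
for `0 ≤ α ≤ 1` and `0 ≤ γ < 1 − α`, the protocol cannot be both `(1-α)`-accurate and
`γ`-secret: no `(q, α, γ)`-key agreement exists relative to the trivial family. -/
theorem no_it_key_agreement {Ω τ VA VB K : Type*}
    [Fintype Ω] [Fintype τ] [Fintype VA] [Fintype VB] [Fintype K]
    (μ : Ω → ℝ) (hμ : IsPMF μ)
    (viewA : Ω → VA) (viewB : Ω → VB) (Tr : Ω → τ)
    (fA : VA → K) (fB : VB → K)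
    -- the transcript is part of Alice's view
    (hTrA : ∃ gA : VA → τ, Tr = fun ω => gA (viewA ω))
    -- the parties' views are conditionally independent given the transcript
    (hcond : ∀ (t : τ) (a : VA) (b : VB),
        prEv μ (fun ω => viewA ω = a ∧ viewB ω = b ∧ Tr ω = t) *
            prEv μ (fun ω => Tr ω = t)
          = prEv μ (fun ω => viewA ω = a ∧ Tr ω = t) *
            prEv μ (fun ω => viewB ω = b ∧ Tr ω = t)) :
    (∃ e : τ → K → ℝ,
        (∀ t, (∀ k, 0 ≤ e t k) ∧ ∑ k, e t k = 1) ∧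
        (∑ ω, μ ω * e (Tr ω) (fA (viewA ω)))
          = prEv μ (fun ω => fA (viewA ω) = fB (viewB ω))) ∧
    (∀ α γ : ℝ, 0 ≤ α → α ≤ 1 → 0 ≤ γ → γ < 1 - α →
      ¬ (prEv μ (fun ω => fA (viewA ω) = fB (viewB ω)) ≥ 1 - α ∧
         ∀ e : τ → K → ℝ, (∀ t, (∀ k, 0 ≤ e t k) ∧ ∑ k, e t k = 1) →
           (∑ ω, μ ω * e (Tr ω) (fA (viewA ω))) ≤ γ)) :=
  no_it_key_agreement_general μ hμ viewA viewB Tr fA fB hcond
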